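/- d_{2,1} = √3 · π / 8; that is, the infimum of the densities of lattices of translates of the closed unit disc in ℝ² such that every line in ℝ² meets some disc of the lattice equals √3 π/8. -/

import Mathlib

/-!
Write `x × y` for the planar cross product and `Δ = b₀ × b₁` for a lattice with basis `b`.
A line through `v` with direction `d` meets the unit disc around `x` iff `|d × (x - v)| ≤ ‖d‖`.

Lower bound: for a nonzero lattice vector `w` the numbers `w × x`, `x` in the lattice, lie in
`Δℤ`, so the line `w × · = Δ/2` misses every disc unless `Δ² ≤ 4‖w‖²`. For `w` shortest, `w` is
primitive, so some lattice vector `u` has `w × u = Δ`; reducing `u` modulo `w` gives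
`2|⟪w, u⟫| ≤ ‖w‖²`, and Lagrange's identity yields Hermite's bound `3‖w‖⁴ ≤ 4Δ²`. Together,
`|Δ| ≤ 8/√3`.

Upper bound: in the hexagonal lattice of covolume `8/√3`, for every direction `d` one of the three
shortest vectors `u` has `0 < |d × u| ≤ 2‖d‖` (the squares of the three cross products sum to
`8‖d‖²`). Rounding `(d × v)/(d × u)` to an integer `N` then gives `|d × (N • u - v)| ≤ ‖d‖`.
-/

open scoped Pointwise
open MeasureTheory RealInnerProductSpace

noncomputable section

/-- Euclidean `n`-space. -/
abbrev Euc (n : ℕ) : Type := EuclideanSpace ℝ (Fin n)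

/-- The (full-rank, when `b` is linearly independent) lattice generated by `b`. -/
def latticeOf {n : ℕ} (b : Fin n → Euc n) : Set (Euc n) :=
  { x | ∃ c : Fin n → ℤ, x = ∑ i, (c i : ℝ) • b i }

/-- Covolume (absolute determinant) of the lattice generated by `b`. -/
def covol {n : ℕ} (b : Fin n → Euc n) : ℝ :=
  |Matrix.det (Matrix.of fun i j => b i j)|

/-- A convex body: convex, compact, with nonempty interior. -/
def IsConvexBody {n : ℕ} (K : Set (Euc n)) : Prop :=
  Convex ℝ K ∧ IsCompact K ∧ (interior K).Nonempty

/-- The lattice `L` of translates of `K` is `k`-impassable: every `k`-dimensional affine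
subspace of `ℝⁿ` meets some translate `x + K`, `x ∈ L`. -/
def IsImpassable {n : ℕ} (k : ℕ) (K L : Set (Euc n)) : Prop :=
  ∀ (W : Submodule ℝ (Euc n)) (v : Euc n), Module.finrank ℝ W = k →
    ∃ x ∈ L, ((v +ᵥ (W : Set (Euc n))) ∩ (x +ᵥ K)).Nonempty

/-- `d_{n,k}(K)`: the infimum of densities of `k`-impassable lattices of translates of `K`. -/
def dImp (n k : ℕ) (K : Set (Euc n)) : ℝ :=
  sInf { d : ℝ | ∃ b : Fin n → Euc n, LinearIndependent ℝ b ∧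
    IsImpassable k K (latticeOf b) ∧ d = (volume K).toReal / covol b }

/-- The closed unit ball `Bⁿ`. -/
def unitBall (n : ℕ) : Set (Euc n) := Metric.closedBall 0 1

/-- `κ_n`, the volume of the unit ball. -/
def ballVol (n : ℕ) : ℝ := (volume (unitBall n)).toReal

/-- `d_{n,k} = d_{n,k}(Bⁿ)`. -/
def dImpBall (n k : ℕ) : ℝ := dImp n k (unitBall n)

/-- The lattice generated by `b` gives a lattice packing of translates of `K`. -/
def IsLatticePacking {n : ℕ} (K : Set (Euc n)) (b : Fin n → Euc n) : Prop :=
  LinearIndependent ℝ b ∧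
    (latticeOf b).Pairwise fun x y => Disjoint (interior (x +ᵥ K)) (interior (y +ᵥ K))

/-- `δ_L(K)`: density of the densest lattice packing by translates of `K`. -/
def packingDensity (n : ℕ) (K : Set (Euc n)) : ℝ :=
  sSup { d : ℝ | ∃ b : Fin n → Euc n, IsLatticePacking K b ∧ d = (volume K).toReal / covol b }

/-- `ϑ_L(Bᵐ)`: density of the thinnest lattice covering of `ℝᵐ` by unit balls. -/
def coveringDensityBall (m : ℕ) : ℝ :=
  sInf { d : ℝ | ∃ b : Fin m → Euc m, LinearIndependent ℝ b ∧
    (⋃ x ∈ latticeOf b, x +ᵥ unitBall m) = Set.univ ∧ d = ballVol m / covol b }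

/-- The `k`-dimensional covolume of the sublattice spanned by `c` (square root of the
Gram determinant). -/
def subCovol {n k : ℕ} (c : Fin k → Euc n) : ℝ :=
  Real.sqrt |Matrix.det (Matrix.of fun i j => (⟪c i, c j⟫ : ℝ))|

/-- `D_k(L)`: minimum of the `k`-dimensional covolumes of `k`-dimensional sublattices
of the lattice generated by `b`. -/
def Dk (n k : ℕ) (b : Fin n → Euc n) : ℝ :=
  sInf { d : ℝ | ∃ c : Fin k → Euc n, LinearIndependent ℝ c ∧
    (∀ i, c i ∈ latticeOf b) ∧ d = subCovol c }

/-- `c_{n,k}`: least constant `c > 0` with `D_k(L) ≤ c · D(L)^{k/n}` for all full-rank `L`. -/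
def cConst (n k : ℕ) : ℝ :=
  sInf { c : ℝ | 0 < c ∧ ∀ b : Fin n → Euc n, LinearIndependent ℝ b →
    Dk n k b ≤ c * covol b ^ ((k : ℝ) / (n : ℝ)) }

/-- A zonotope: a finite Minkowski sum of segments. -/
def IsZonotope {n : ℕ} (K : Set (Euc n)) : Prop :=
  ∃ (m : ℕ) (a c : Fin m → Euc n), K = ∑ i : Fin m, segment ℝ (a i) (c i)

/-- A zonoid: a convex body that is a Hausdorff limit of zonotopes. -/
def IsZonoid {n : ℕ} (K : Set (Euc n)) : Prop :=
  IsConvexBody K ∧ ∃ Z : ℕ → Set (Euc n), (∀ j, IsZonotope (Z j)) ∧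
    Filter.Tendsto (fun j => Metric.hausdorffDist (Z j) K) Filter.atTop (nhds 0)

/-- The polar body `K* = {y | ⟨x,y⟩ ≤ 1 for all x ∈ K}`. -/
def polarBody {n : ℕ} (K : Set (Euc n)) : Set (Euc n) :=
  { y | ∀ x ∈ K, (⟪x, y⟫ : ℝ) ≤ 1 }

/-- A cross-polytope: a bijective affine image of `conv{±e₁, …, ±e_n}`. -/
def IsCrossPolytope {n : ℕ} (K : Set (Euc n)) : Prop :=
  ∃ f : Euc n →ᵃ[ℝ] Euc n, Function.Bijective f ∧
    K = f '' convexHull ℝ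
      (⋃ i : Fin n, ({EuclideanSpace.single i (1 : ℝ),
        -EuclideanSpace.single i (1 : ℝ)} : Set (Euc n)))

/-- Symmetry with respect to all coordinate hyperplanes. -/
def SymmCoordHyperplanes {n : ℕ} (K : Set (Euc n)) : Prop :=
  ∀ x ∈ K, ∀ ε : Fin n → ℝ, (∀ i, ε i = 1 ∨ ε i = -1) →
    (show Euc n from WithLp.toLp 2 fun i => ε i * x i) ∈ K

/-- The central symmetral `(K - K)/2`. -/
def halfDiff {n : ℕ} (K : Set (Euc n)) : Set (Euc n) := (2⁻¹ : ℝ) • (K - K)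

/-- A line through `v` with direction `d`. -/
def lineThrough {n : ℕ} (v d : Euc n) : Set (Euc n) := { p | ∃ t : ℝ, p = v + t • d }

/-- The open infinite circular cylinder of radius `r` around the line through `v`
with direction `d`: points at distance `< r` from the line. -/
def openCylinder {n : ℕ} (v d : Euc n) (r : ℝ) : Set (Euc n) :=
  { p | Metric.infDist p (lineThrough v d) < r }

open Real Submodule Set

theorem linearIndependent_iff_covol_pos {n : ℕ} (b : Fin n → Euc n) :
    LinearIndependent ℝ b ↔ 0 < covol b := by
  rw [covol, abs_pos, ← isUnit_iff_ne_zero, ← Matrix.isUnit_iff_isUnit_det,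
    ← Matrix.linearIndependent_rows_iff_isUnit,
    ← LinearMap.linearIndependent_iff (WithLp.linearEquiv 2 ℝ (Fin n → ℝ)).toLinearMap
      (LinearEquiv.ker _)]
  rfl

theorem latticeOf_eq_span {n : ℕ} (b : Fin n → Euc n) :
    latticeOf b = span ℤ (range b) := by
  ext x
  simp only [latticeOf, mem_ofPred_eq, SetLike.mem_coe, mem_span_range_iff_exists_fun,
    Int.cast_smul_eq_zsmul, eq_comm]

theorem Submodule.exists_forall_norm_le_of_ne_bot {E : Type*} [NormedAddCommGroup E]
    [ProperSpace E] (L : Submodule ℤ E) [DiscreteTopology L] (hL : L ≠ ⊥) :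
    ∃ w ∈ L, w ≠ 0 ∧ ∀ x ∈ L, x ≠ 0 → ‖w‖ ≤ ‖x‖ := by
  obtain ⟨x₀, hx₀, hx₀0⟩ := L.exists_mem_ne_zero_of_ne_bot hL
  have hfin : ((Metric.closedBall 0 ‖x₀‖ ∩ (L : Set E)) \ {0}).Finite :=
    (Metric.finite_isBounded_inter_isClosed DiscreteTopology.isDiscrete
      Metric.isBounded_closedBall (AddSubgroup.isClosed_of_discrete (H := L.toAddSubgroup))).sdiff
  obtain ⟨w, ⟨⟨hw, hwL⟩, hw0⟩, hmin⟩ := exists_min_image _ (‖·‖) hfin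
    ⟨x₀, ⟨by simp, hx₀⟩, hx₀0⟩
  rw [mem_closedBall_zero_iff] at hw
  refine ⟨w, hwL, hw0, fun x hxL hx0 => ?_⟩
  rcases le_total ‖x‖ ‖x₀‖ with hx | hx
  · exact hmin x ⟨⟨mem_closedBall_zero_iff.2 hx, hxL⟩, hx0⟩
  · exact hw.trans hx

theorem exists_forall_norm_le_latticeOf {n : ℕ} [NeZero n] {b : Fin n → Euc n}
    (hb : LinearIndependent ℝ b) :
    ∃ w ∈ latticeOf b, w ≠ 0 ∧ ∀ x ∈ latticeOf b, x ≠ 0 → ‖w‖ ≤ ‖x‖ := by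
  have : DiscreteTopology (span ℤ (range
      (basisOfLinearIndependentOfCardEqFinrank' (K := ℝ) b hb (by simp)))) := inferInstance
  rw [coe_basisOfLinearIndependentOfCardEqFinrank'] at this
  simpa [latticeOf_eq_span] using (span ℤ (range b)).exists_forall_norm_le_of_ne_bot
    ((Submodule.ne_bot_iff _).2 ⟨b 0, subset_span ⟨0, rfl⟩, hb.ne_zero 0⟩)

theorem mem_latticeOf_two {b : Fin 2 → Euc 2} {x : Euc 2} :
    x ∈ latticeOf b ↔ ∃ m n : ℤ, x = (m : ℝ) • b 0 + (n : ℝ) • b 1 := by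
  simp only [latticeOf, mem_ofPred_eq, Fin.sum_univ_two]
  exact ⟨fun ⟨c, hc⟩ => ⟨c 0, c 1, hc⟩, fun ⟨m, n, h⟩ => ⟨![m, n], by simpa using h⟩⟩

namespace Impassable

def cross (x y : Euc 2) : ℝ := x 0 * y 1 - x 1 * y 0

@[simp] theorem cross_self (x : Euc 2) : cross x x = 0 := by
  simp only [cross]; ring

@[simp] theorem cross_sub_right (x y z : Euc 2) : cross x (y - z) = cross x y - cross x z := by
  simp only [cross, PiLp.sub_apply]; ring

@[simp] theorem cross_smul_right (x y : Euc 2) (c : ℝ) : cross x (c • y) = c * cross x y := by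
  simp only [cross, PiLp.smul_apply, smul_eq_mul]; ring

theorem norm_sq_fin_two (x : Euc 2) : ‖x‖ ^ 2 = x 0 ^ 2 + x 1 ^ 2 := by
  simp [EuclideanSpace.norm_sq_eq, Fin.sum_univ_two]

theorem inner_sq_add_cross_sq (x y : Euc 2) : ⟪x, y⟫ ^ 2 + cross x y ^ 2 = ‖x‖ ^ 2 * ‖y‖ ^ 2 := by
  simp only [norm_sq_fin_two, cross, EuclideanSpace.inner_eq_star_dotProduct, dotProduct,
    Fin.sum_univ_two, Pi.star_apply, star_trivial]
  ring

theorem abs_cross_le (x y : Euc 2) : |cross x y| ≤ ‖x‖ * ‖y‖ := by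
  refine abs_le_of_sq_le_sq ?_ (by positivity)
  nlinarith [inner_sq_add_cross_sq x y, sq_nonneg ⟪x, y⟫]

theorem covol_eq_abs_cross (b : Fin 2 → Euc 2) : covol b = |cross (b 0) (b 1)| := by
  simp [covol, cross, Matrix.det_fin_two]

theorem line_inter_unitBall_nonempty_iff {d : Euc 2} (hd : d ≠ 0) (v x : Euc 2) :
    ((v +ᵥ (span ℝ {d} : Set (Euc 2))) ∩ (x +ᵥ unitBall 2)).Nonempty ↔
      |cross d (x - v)| ≤ ‖d‖ := by
  simp only [unitBall, vadd_closedBall_zero]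
  constructor
  · rintro ⟨_, ⟨_, hy, rfl⟩, hp⟩
    obtain ⟨t, rfl⟩ := mem_span_singleton.1 hy
    simp only [Metric.mem_closedBall, dist_eq_norm, vadd_eq_add] at hp
    have hcross : cross d (x - v) = -cross d (v + t • d - x) := by
      rw [show x - v = t • d - (v + t • d - x) by abel]; simp
    rw [hcross, abs_neg]
    exact (abs_cross_le _ _).trans (mul_le_of_le_one_right (norm_nonneg d) hp)
  · intro h
    have hd2 : 0 < ‖d‖ ^ 2 := by positivity
    refine ⟨v + (⟪d, x - v⟫ / ‖d‖ ^ 2) • d, ⟨_, smul_mem _ _ (mem_span_singleton_self d), rfl⟩, ?_⟩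
    rw [Metric.mem_closedBall, dist_eq_norm,
      show v + (⟪d, x - v⟫ / ‖d‖ ^ 2) • d - x = (⟪d, x - v⟫ / ‖d‖ ^ 2) • d - (x - v) by abel]
    refine (sq_le_one_iff₀ (norm_nonneg _)).1 ?_
    rw [norm_sub_sq_real, norm_smul, real_inner_smul_left, mul_pow, Real.norm_eq_abs, sq_abs]
    have hL := inner_sq_add_cross_sq d (x - v)
    have hc : cross d (x - v) ^ 2 ≤ ‖d‖ ^ 2 := by
      rw [← sq_abs]; exact pow_le_pow_left₀ (abs_nonneg _) h 2
    field_simp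
    nlinarith

theorem isImpassable_one_unitBall_iff (L : Set (Euc 2)) :
    IsImpassable 1 (unitBall 2) L ↔ ∀ d v : Euc 2, d ≠ 0 → ∃ x ∈ L, |cross d (x - v)| ≤ ‖d‖ := by
  constructor
  · intro h d v hd
    obtain ⟨x, hxL, hx⟩ := h _ v (finrank_span_singleton hd)
    exact ⟨x, hxL, (line_inter_unitBall_nonempty_iff hd v x).1 hx⟩
  · intro h W v hW
    obtain ⟨d, hdW, hd⟩ := W.exists_mem_ne_zero_of_ne_bot
      (by rintro rfl; simp at hW)
    rw [eq_span_singleton_of_mem_of_finrank_eq_one hW hdW hd]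
    obtain ⟨x, hxL, hx⟩ := h d v hd
    exact ⟨x, hxL, (line_inter_unitBall_nonempty_iff hd v x).2 hx⟩

theorem cross_smul_add_smul (x y : Euc 2) (m n m' n' : ℝ) :
    cross (m • x + n • y) (m' • x + n' • y) = (m * n' - n * m') * cross x y := by
  simp only [cross, PiLp.add_apply, PiLp.smul_apply, smul_eq_mul]; ring

theorem exists_int_cross_eq {b : Fin 2 → Euc 2} {x y : Euc 2} (hx : x ∈ latticeOf b)
    (hy : y ∈ latticeOf b) : ∃ k : ℤ, cross x y = k * cross (b 0) (b 1) := by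
  obtain ⟨m, n, rfl⟩ := mem_latticeOf_two.1 hx
  obtain ⟨m', n', rfl⟩ := mem_latticeOf_two.1 hy
  exact ⟨m * n' - n * m', by rw [cross_smul_add_smul]; push_cast; rfl⟩

theorem exists_cross_eq {x : Euc 2} (hx : x ≠ 0) (c : ℝ) : ∃ y, cross x y = c := by
  have hrot : cross x !₂[-x 1, x 0] = ‖x‖ ^ 2 := by
    simp only [cross, norm_sq_fin_two, Matrix.cons_val_zero, Matrix.cons_val_one,
      Matrix.cons_val_fin_one]
    ring
  refine ⟨(c / ‖x‖ ^ 2) • !₂[-x 1, x 0], ?_⟩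
  rw [cross_smul_right, hrot]
  field_simp

theorem cross_sq_le_of_isImpassable {b : Fin 2 → Euc 2}
    (him : IsImpassable 1 (unitBall 2) (latticeOf b)) {w : Euc 2} (hw : w ∈ latticeOf b)
    (hw0 : w ≠ 0) : cross (b 0) (b 1) ^ 2 ≤ 4 * ‖w‖ ^ 2 := by
  obtain ⟨v, hv⟩ := exists_cross_eq hw0 (cross (b 0) (b 1) / 2)
  obtain ⟨x, hx, hxv⟩ := (isImpassable_one_unitBall_iff _).1 him w v hw0
  obtain ⟨k, hk⟩ := exists_int_cross_eq hw hx
  rw [cross_sub_right, hk, hv] at hxv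
  have hk2 : (1 : ℝ) ≤ (2 * k - 1) ^ 2 := by
    have : (1 : ℤ) ≤ (2 * k - 1) ^ 2 := by rcases le_or_gt k 0 with h | h <;> nlinarith
    exact_mod_cast this
  nlinarith [sq_abs (k * cross (b 0) (b 1) - cross (b 0) (b 1) / 2),
    pow_le_pow_left₀ (abs_nonneg _) hxv 2]

theorem exists_cross_eq_of_forall_norm_le {b : Fin 2 → Euc 2} {w : Euc 2}
    (hw : w ∈ latticeOf b) (hw0 : w ≠ 0) (hmin : ∀ x ∈ latticeOf b, x ≠ 0 → ‖w‖ ≤ ‖x‖) :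
    ∃ u ∈ latticeOf b, cross w u = cross (b 0) (b 1) := by
  obtain ⟨p, q, rfl⟩ := mem_latticeOf_two.1 hw
  have hgcd : p.gcd q = 1 := by
    obtain ⟨p', hp⟩ := Int.gcd_dvd_left p q
    obtain ⟨q', hq⟩ := Int.gcd_dvd_right p q
    set w' : Euc 2 := (p' : ℝ) • b 0 + (q' : ℝ) • b 1
    have hw' : (p : ℝ) • b 0 + (q : ℝ) • b 1 = (p.gcd q : ℝ) • w' := by
      rw [show (p : ℝ) = p.gcd q * p' by exact_mod_cast hp,
        show (q : ℝ) = p.gcd q * q' by exact_mod_cast hq]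
      simp only [w', smul_add, smul_smul]
    rw [hw'] at hw0 hmin
    have hw'0 : w' ≠ 0 := right_ne_zero_of_smul hw0
    have hg0 : p.gcd q ≠ 0 := by exact_mod_cast left_ne_zero_of_smul hw0
    have hle := hmin w' (mem_latticeOf_two.2 ⟨p', q', rfl⟩) hw'0
    rw [norm_smul, Real.norm_natCast] at hle
    have : (p.gcd q : ℝ) ≤ 1 := by nlinarith [norm_pos_iff.2 hw'0]
    have : p.gcd q ≤ 1 := by exact_mod_cast this
    omega
  refine ⟨((-p.gcdB q : ℤ) : ℝ) • b 0 + (p.gcdA q : ℝ) • b 1,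
    mem_latticeOf_two.2 ⟨_, _, rfl⟩, ?_⟩
  have hbezout : (p : ℝ) * p.gcdA q - q * ((-p.gcdB q : ℤ) : ℝ) = 1 := by
    have := Int.gcd_eq_gcd_ab p q
    rw [hgcd] at this
    push_cast
    exact_mod_cast (by linear_combination -this : p * p.gcdA q - q * -p.gcdB q = 1)
  rw [cross_smul_add_smul, hbezout, one_mul]

theorem exists_cross_eq_two_mul_abs_inner_le (L : Submodule ℤ (Euc 2)) {w u : Euc 2}
    (hw : w ∈ L) (hu : u ∈ L) (hw0 : w ≠ 0) :
    ∃ u' ∈ L, cross w u' = cross w u ∧ 2 * |⟪w, u'⟫| ≤ ‖w‖ ^ 2 := by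
  set k := round (⟪w, u⟫ / ‖w‖ ^ 2)
  have hw2 : 0 < ‖w‖ ^ 2 := by positivity
  refine ⟨u - k • w, L.sub_mem hu (L.smul_mem k hw), ?_, ?_⟩
  · rw [← Int.cast_smul_eq_zsmul ℝ, cross_sub_right, cross_smul_right, cross_self, mul_zero,
      sub_zero]
  · rw [inner_sub_right, ← Int.cast_smul_eq_zsmul ℝ, real_inner_smul_right,
      real_inner_self_eq_norm_sq,
      show ⟪w, u⟫ - k * ‖w‖ ^ 2 = (⟪w, u⟫ / ‖w‖ ^ 2 - k) * ‖w‖ ^ 2 by field_simp,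
      abs_mul, abs_of_pos hw2]
    nlinarith [abs_sub_round (⟪w, u⟫ / ‖w‖ ^ 2)]

theorem three_mul_norm_pow_four_le_four_mul_cross_sq {w u : Euc 2} (hwu : ‖w‖ ≤ ‖u‖)
    (hinner : 2 * |⟪w, u⟫| ≤ ‖w‖ ^ 2) : 3 * ‖w‖ ^ 4 ≤ 4 * cross w u ^ 2 := by
  have h1 : ‖w‖ ^ 2 ≤ ‖u‖ ^ 2 := pow_le_pow_left₀ (norm_nonneg w) hwu 2
  have h2 : 4 * ⟪w, u⟫ ^ 2 ≤ ‖w‖ ^ 4 := by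
    nlinarith [sq_abs ⟪w, u⟫, pow_le_pow_left₀ (by positivity) hinner 2]
  nlinarith [inner_sq_add_cross_sq w u, sq_nonneg ‖w‖]

theorem covol_le_of_isImpassable {b : Fin 2 → Euc 2} (hb : LinearIndependent ℝ b)
    (him : IsImpassable 1 (unitBall 2) (latticeOf b)) : covol b ≤ 8 / √3 := by
  obtain ⟨w, hw, hw0, hmin⟩ := exists_forall_norm_le_latticeOf hb
  obtain ⟨u, hu, hwu⟩ := exists_cross_eq_of_forall_norm_le hw hw0 hmin
  rw [latticeOf_eq_span] at hw hu
  obtain ⟨u', hu', hwu', hinner⟩ := exists_cross_eq_two_mul_abs_inner_le _ hw hu hw0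
  have hΔ : cross (b 0) (b 1) ≠ 0 := by
    rw [← abs_pos, ← covol_eq_abs_cross]; exact (linearIndependent_iff_covol_pos b).1 hb
  have hu'0 : u' ≠ 0 := by
    rintro rfl; exact hΔ (by rw [← hwu, ← hwu']; simp [cross])
  have hhermite := three_mul_norm_pow_four_le_four_mul_cross_sq
    (hmin u' (by rw [latticeOf_eq_span]; exact hu') hu'0) hinner
  have himp := cross_sq_le_of_isImpassable him (by rw [latticeOf_eq_span]; exact hw) hw0
  rw [hwu', hwu] at hhermite
  rw [covol_eq_abs_cross]
  refine abs_le_of_sq_le_sq ?_ (by positivity)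
  rw [div_pow, Real.sq_sqrt (by norm_num)]
  nlinarith [pow_pos (sq_pos_of_ne_zero hΔ) 1, pow_le_pow_left₀ (sq_nonneg _) himp 2]

theorem isImpassable_of_forall_exists_cross (L : Submodule ℤ (Euc 2))
    (h : ∀ d : Euc 2, d ≠ 0 → ∃ u ∈ L, cross d u ≠ 0 ∧ |cross d u| ≤ 2 * ‖d‖) :
    IsImpassable 1 (unitBall 2) L := by
  refine (isImpassable_one_unitBall_iff _).2 fun d v hd => ?_
  obtain ⟨u, hu, hdu0, hdu⟩ := h d hd
  set N := round (cross d v / cross d u)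
  refine ⟨N • u, L.smul_mem N hu, ?_⟩
  rw [← Int.cast_smul_eq_zsmul ℝ, cross_sub_right, cross_smul_right,
    show N * cross d u - cross d v = -((cross d v / cross d u - N) * cross d u) by
      field_simp; ring,
    abs_neg, abs_mul]
  nlinarith [abs_sub_round (cross d v / cross d u), abs_nonneg (cross d u)]

-- The hexagonal lattice in which consecutive rows parallel to any of the three shortest vectors
-- (`hexBasis 0`, `hexBasis 1` and their difference) are `2` apart, the diameter of the disc.
def hexBasis : Fin 2 → Euc 2 := ![!₂[4 / √3, 0], !₂[2 / √3, 2]]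

theorem covol_hexBasis : covol hexBasis = 8 / √3 := by
  rw [covol_eq_abs_cross, abs_eq_self.2 (by simp [hexBasis, cross])]
  simp only [hexBasis, cross, Matrix.cons_val_zero, Matrix.cons_val_one, Matrix.cons_val_fin_one]
  ring

theorem sum_sq_cross_hexBasis (d : Euc 2) :
    cross d (hexBasis 0) ^ 2 + cross d (hexBasis 1) ^ 2 + cross d (hexBasis 1 - hexBasis 0) ^ 2
      = 8 * ‖d‖ ^ 2 := by
  have h3 : √3 ^ 2 = 3 := Real.sq_sqrt (by norm_num)
  simp only [hexBasis, cross, norm_sq_fin_two, PiLp.sub_apply, Matrix.cons_val_zero,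
    Matrix.cons_val_one, Matrix.cons_val_fin_one]
  field_simp
  nlinarith [h3]

theorem exists_cross_hexBasis {d : Euc 2} (hd : d ≠ 0) :
    ∃ u ∈ span ℤ (range hexBasis), cross d u ≠ 0 ∧ |cross d u| ≤ 2 * ‖d‖ := by
  have hmem : ∀ i, hexBasis i ∈ span ℤ (range hexBasis) := fun i => subset_span ⟨i, rfl⟩
  have hsum := sum_sq_cross_hexBasis d
  rw [cross_sub_right] at hsum
  have hd2 : 0 < ‖d‖ := norm_pos_iff.2 hd
  -- The third cross product is the difference of the first two, so two of them vanish only if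
  -- all three do.
  by_contra! hbig
  have hzero_or_big : ∀ u ∈ span ℤ (range hexBasis), cross d u = 0 ∨ 4 * ‖d‖ ^ 2 < cross d u ^ 2 :=
    fun u hu => (eq_or_ne _ 0).imp_right fun h => by
      nlinarith [sq_abs (cross d u), hbig u hu h]
  rcases hzero_or_big _ (hmem 0) with h0 | h0 <;>
  rcases hzero_or_big _ (hmem 1) with h1 | h1 <;>
  rcases hzero_or_big _ (sub_mem (hmem 1) (hmem 0)) with h10 | h10 <;>
  rw [cross_sub_right] at h10 <;> nlinarith

theorem linearIndependent_hexBasis : LinearIndependent ℝ hexBasis := by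
  rw [linearIndependent_iff_covol_pos, covol_hexBasis]; positivity

theorem isImpassable_hexBasis : IsImpassable 1 (unitBall 2) (latticeOf hexBasis) := by
  rw [latticeOf_eq_span]
  exact isImpassable_of_forall_exists_cross _ fun _ => exists_cross_hexBasis

theorem volume_unitBall_two : (volume (unitBall 2)).toReal = π := by
  rw [unitBall, EuclideanSpace.volume_closedBall_fin_two]
  simp [Real.pi_pos.le]

end Impassable

open Impassable

/-- `d_{2,1} = √3 · π / 8`. -/
theorem stmt_6 : dImpBall 2 1 = Real.sqrt 3 * Real.pi / 8 := by
  have hhex : √3 * π / 8 ∈ { d : ℝ | ∃ b : Fin 2 → Euc 2, LinearIndependent ℝ b ∧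
      IsImpassable 1 (unitBall 2) (latticeOf b) ∧ d = (volume (unitBall 2)).toReal / covol b } :=
    ⟨hexBasis, linearIndependent_hexBasis, isImpassable_hexBasis, by
      rw [volume_unitBall_two, covol_hexBasis]; field_simp⟩
  refine le_antisymm (csInf_le ⟨0, ?_⟩ hhex) (le_csInf ⟨_, hhex⟩ ?_)
  · rintro _ ⟨b, -, -, rfl⟩
    exact div_nonneg ENNReal.toReal_nonneg (abs_nonneg _)
  · rintro _ ⟨b, hb, him, rfl⟩
    have hcovol := (linearIndependent_iff_covol_pos b).1 hb
    rw [volume_unitBall_two, le_div_iff₀ hcovol]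
    calc √3 * π / 8 * covol b ≤ √3 * π / 8 * (8 / √3) := by
          gcongr; exact covol_le_of_isImpassable hb him
      _ = π := by field_simp
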